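/- arXiv:math/0510361 — 2 statements merged into one kernel-verified Lean document; each statement's English description precedes it below -/
import Mathlib

section
/- Let F = {f_i}_{i∈I} and E = {e_j}_{j∈G} be sequences in H with associated map a : I → G such that D⁺(I,a) < ∞ (equivalently, sup_{n∈G} |a⁻¹(n)| < ∞ after noting finiteness of fibers follows from finite upper density). If (F,a,E) is ℓᵖ-localized for some 1 ≤ p < ∞, then (F,a,E) has both ℓᵖ-column decay and ℓᵖ-row decay. -/
open scoped InnerProductSpace

/-!
Both decay conditions are tail estimates for the single summable function
`h g = r g ^ p + r (-g) ^ p`, which dominates `‖⟪f i, e j⟫‖ ^ p` both at `a i - j` and at `j - a i`.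
Along a row, `j ↦ j - a i` is injective, so the row tail is at most the tail of `h`; along a
column, `i ↦ a i - j` is at most `K`-to-one, so the column tail is at most `K` times the tail of `h`.
-/

theorem Summable.exists_tsum_norm_gt_mem {E F : Type*} [Norm E] [AddCommGroup F]
    [TopologicalSpace F] [IsTopologicalAddGroup F] {h : E → F} (hh : Summable h)
    {e : Set F} (he : e ∈ nhds 0) :
    ∃ N : ℕ, ∑' g : {g : E // ¬ ‖g‖ ≤ (N : ℝ) / 2}, h g ∈ e := by
  obtain ⟨s, hs⟩ := hh.tsum_vanishing he
  obtain ⟨M, hM⟩ := (s.image (‖·‖)).bddAbove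
  obtain ⟨N, hN⟩ := exists_nat_ge (2 * M)
  refine ⟨N, hs {g | ¬ ‖g‖ ≤ (N : ℝ) / 2} (Set.disjoint_left.2 fun g hg hgs => hg ?_)⟩
  have : ‖g‖ ≤ M := hM (Finset.mem_coe.2 (Finset.mem_image_of_mem _ hgs))
  linarith

section FiniteToOne

variable {α β : Type*} {φ : α → β} {K : ℕ} {u : α → ℝ} {h : β → ℝ}

open Finset in
theorem tsum_le_mul_tsum_of_le_comp_of_card_fiber_le
    (hφ : ∀ b, (φ ⁻¹' {b}).Finite ∧ Nat.card (φ ⁻¹' {b}) ≤ K)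
    (huh : ∀ x, u x ≤ h (φ x)) (h0 : ∀ b, 0 ≤ h b) (hh : Summable h) :
    ∑' x, u x ≤ K * ∑' b, h b := by
  classical
  refine tsum_le_of_sum_le' (mul_nonneg K.cast_nonneg (tsum_nonneg h0)) fun s => ?_
  have hcard : ∀ b, #{x ∈ s | φ x = b} ≤ K := fun b =>
    calc #{x ∈ s | φ x = b} = (↑{x ∈ s | φ x = b} : Set α).ncard := (Set.ncard_coe_finset _).symm
      _ ≤ (φ ⁻¹' {b}).ncard :=
          Set.ncard_le_ncard (fun x hx => (mem_filter.1 hx).2) (hφ b).1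
      _ ≤ K := (hφ b).2
  calc ∑ x ∈ s, u x ≤ ∑ x ∈ s, h (φ x) := sum_le_sum fun x _ => huh x
    _ = ∑ b ∈ s.image φ, #{x ∈ s | φ x = b} • h b := sum_comp h φ
    _ ≤ ∑ b ∈ s.image φ, K * h b := sum_le_sum fun b _ => by
          rw [nsmul_eq_mul]
          exact mul_le_mul_of_nonneg_right (by exact_mod_cast hcard b) (h0 b)
    _ = K * ∑ b ∈ s.image φ, h b := (mul_sum _ _ _).symm
    _ ≤ K * ∑' b, h b := by
          gcongr
          exact hh.sum_le_tsum _ fun b _ => h0 b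

theorem tsum_subtype_preimage_le_mul_tsum_subtype
    (hφ : ∀ b, (φ ⁻¹' {b}).Finite ∧ Nat.card (φ ⁻¹' {b}) ≤ K)
    (huh : ∀ x, u x ≤ h (φ x)) (h0 : ∀ b, 0 ≤ h b) (hh : Summable h) (t : Set β) :
    ∑' x : ↥(φ ⁻¹' t), u x ≤ K * ∑' b : t, h b := by
  rw [tsum_subtype, tsum_subtype]
  refine tsum_le_mul_tsum_of_le_comp_of_card_fiber_le hφ (fun x => ?_)
    (Set.indicator_nonneg fun b _ => h0 b) (hh.indicator t)
  rw [← Set.indicator_comp_right]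
  exact Set.indicator_le_indicator (huh x)

end FiniteToOne

theorem tsum_norm_sub_gt_le_mul_tsum_norm_gt {α G : Type*} [AddGroup G] [Norm G]
    {a : α → G} {K : ℕ} (hK : ∀ n, (a ⁻¹' {n}).Finite ∧ Nat.card (a ⁻¹' {n}) ≤ K)
    {u : α → ℝ} {h : G → ℝ} {j : G} (huh : ∀ x, u x ≤ h (a x - j)) (h0 : ∀ g, 0 ≤ h g)
    (hh : Summable h) (R : ℝ) :
    ∑' x : {x : α // ¬ ‖a x - j‖ ≤ R}, u x ≤ K * ∑' g : {g : G // ¬ ‖g‖ ≤ R}, h g := by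
  have hfiber : ∀ g, (fun x => a x - j) ⁻¹' {g} = a ⁻¹' {g + j} := fun g => by
    ext x
    simp [sub_eq_iff_eq_add]
  exact tsum_subtype_preimage_le_mul_tsum_subtype (fun g => hfiber g ▸ hK (g + j)) huh h0 hh
    {g | ¬ ‖g‖ ≤ R}

theorem stmt_9_general
    {H : Type*} [NormedAddCommGroup H] [InnerProductSpace ℂ H]
    {I G : Type*} [NormedAddCommGroup G]
    (f : I → H) (e : G → H) (a : I → G) (p : ℝ) (hp : 1 ≤ p)
    -- finite upper density: uniformly finite fibers
    (K : ℕ) (hK : ∀ n : G, (a ⁻¹' {n}).Finite ∧ Nat.card (a ⁻¹' {n}) ≤ K)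
    -- ℓᵖ-localization
    (r : G → ℝ) (hr0 : ∀ g : G, 0 ≤ r g) (hr : Summable fun g => r g ^ p)
    (hloc : ∀ (i : I) (j : G), ‖⟪f i, e j⟫_ℂ‖ ≤ r (a i - j)) :
    -- ℓᵖ-column decay
    (∀ ε > (0 : ℝ), ∃ N : ℕ, ∀ j : G,
      ∑' i : {i : I // ¬ ‖a i - j‖ ≤ (N : ℝ) / 2}, ‖⟪f i.1, e j⟫_ℂ‖ ^ p < ε) ∧
    -- ℓᵖ-row decay
    (∀ ε > (0 : ℝ), ∃ N : ℕ, ∀ i : I,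
      ∑' j : {j : G // ¬ ‖j - a i‖ ≤ (N : ℝ) / 2}, ‖⟪f i, e j.1⟫_ℂ‖ ^ p < ε) := by
  set h : G → ℝ := fun g => r g ^ p + r (-g) ^ p
  have h0 : ∀ g, 0 ≤ h g := fun g =>
    add_nonneg (Real.rpow_nonneg (hr0 g) p) (Real.rpow_nonneg (hr0 (-g)) p)
  have hh : Summable h := hr.add (hr.comp_injective neg_injective)
  have hcol : ∀ i j, ‖⟪f i, e j⟫_ℂ‖ ^ p ≤ h (a i - j) := fun i j =>
    (Real.rpow_le_rpow (norm_nonneg _) (hloc i j) (by linarith)).trans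
      (le_add_of_nonneg_right (Real.rpow_nonneg (hr0 _) p))
  have hrow : ∀ i j, ‖⟪f i, e j⟫_ℂ‖ ^ p ≤ h (j - a i) := fun i j => by
    simpa only [h, neg_sub, add_comm] using hcol i j
  refine ⟨fun ε hε => ?_, fun ε hε => ?_⟩
  · obtain ⟨N, hN⟩ := hh.exists_tsum_norm_gt_mem (Iio_mem_nhds (by positivity : 0 < ε / (K + 1)))
    refine ⟨N, fun j => (tsum_norm_sub_gt_le_mul_tsum_norm_gt hK (hcol · j) h0 hh _).trans_lt ?_⟩
    have hT : 0 ≤ ∑' g : {g : G // ¬ ‖g‖ ≤ (N : ℝ) / 2}, h g := tsum_nonneg fun g => h0 g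
    rw [Set.mem_Iio, lt_div_iff₀ (by positivity)] at hN
    nlinarith
  · obtain ⟨N, hN⟩ := hh.exists_tsum_norm_gt_mem (Iio_mem_nhds hε)
    refine ⟨N, fun i => (tsum_norm_sub_gt_le_mul_tsum_norm_gt (a := id) (K := 1) (fun n => ?_)
      (hrow i) h0 hh _).trans_lt (by simpa using hN)⟩
    simp

/-- If `sup_{n ∈ G} |a⁻¹(n)| < ∞` (the form of finite upper density used in the
proof) and `(F, a, E)` is ℓᵖ-localized for some `1 ≤ p < ∞`, then `(F, a, E)`
has both ℓᵖ-column decay and ℓᵖ-row decay. -/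
theorem stmt_9
    {H : Type*} [NormedAddCommGroup H] [InnerProductSpace ℂ H]
    {I G : Type*} [Countable I] [Countable G] [NormedAddCommGroup G]
    (f : I → H) (e : G → H) (a : I → G) (p : ℝ) (hp : 1 ≤ p)
    -- finite upper density: uniformly finite fibers
    (K : ℕ) (hK : ∀ n : G, (a ⁻¹' {n}).Finite ∧ Nat.card (a ⁻¹' {n}) ≤ K)
    -- ℓᵖ-localization
    (r : G → ℝ) (hr0 : ∀ g : G, 0 ≤ r g) (hr : Summable fun g => r g ^ p)
    (hloc : ∀ (i : I) (j : G), ‖⟪f i, e j⟫_ℂ‖ ≤ r (a i - j)) :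
    -- ℓᵖ-column decay
    (∀ ε > (0 : ℝ), ∃ N : ℕ, ∀ j : G,
      ∑' i : {i : I // ¬ ‖a i - j‖ ≤ (N : ℝ) / 2}, ‖⟪f i.1, e j⟫_ℂ‖ ^ p < ε) ∧
    -- ℓᵖ-row decay
    (∀ ε > (0 : ℝ), ∃ N : ℕ, ∀ i : I,
      ∑' j : {j : G // ¬ ‖j - a i‖ ≤ (N : ℝ) / 2}, ‖⟪f i, e j.1⟫_ℂ‖ ^ p < ε) :=
  stmt_9_general f e a p hp K hK r hr0 hr hloc
end

section
/- Let {e_j}_{j∈ℤ} be an orthonormal basis of H and define f_j = e_j + (4+|j|)^{−1/2} e_{−j} for j ∈ ℤ. Then {f_j}_{j∈ℤ} is a frame for H with lower frame bound 1/4 and upper frame bound 9/4. -/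
open scoped InnerProductSpace ENNReal

/-- If `{e j}` is an orthonormal basis of `H` and
`f j = e j + (4 + |j|)^{-1/2} • e (-j)`, then `{f j}` is a frame for `H` with
lower frame bound `1/4` and upper frame bound `9/4`. -/
theorem stmt_14
    {H : Type*} [NormedAddCommGroup H] [InnerProductSpace ℂ H] [CompleteSpace H]
    (e : ℤ → H) (he : Orthonormal ℂ e)
    (htotal : (Submodule.span ℂ (Set.range e)).topologicalClosure = ⊤)
    (f : ℤ → H)
    (hf : ∀ j : ℤ, f j = e j + ((Real.sqrt (4 + |(j : ℝ)|))⁻¹ : ℂ) • e (-j)) :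
    ∀ x : H, (Summable fun j => ‖⟪x, f j⟫_ℂ‖ ^ 2) ∧
      (1 / 4 : ℝ) * ‖x‖ ^ 2 ≤ ∑' j, ‖⟪x, f j⟫_ℂ‖ ^ 2 ∧
      ∑' j, ‖⟪x, f j⟫_ℂ‖ ^ 2 ≤ (9 / 4 : ℝ) * ‖x‖ ^ 2 := by
  intro x
  have hsp : ⊤ ≤ (Submodule.span ℂ (Set.range e)).topologicalClosure := htotal.ge
  set b : HilbertBasis ℤ ℂ H := HilbertBasis.mk he hsp with hbdef
  have hb : ⇑b = e := HilbertBasis.coe_mk he hsp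
  set u : lp (fun _ : ℤ => ℂ) 2 := b.repr x with hudef
  have hu : ∀ j, u j = ⟪e j, x⟫_ℂ := fun j => by
    rw [hudef, b.repr_apply_apply, hb]
  have hunorm : ‖u‖ = ‖x‖ := b.repr.norm_map x
  -- the coefficient sequence
  set c : ℤ → ℝ := fun j => (Real.sqrt (4 + |(j : ℝ)|))⁻¹ with hcdef
  have hc0 : ∀ j, 0 ≤ c j := fun j => inv_nonneg.2 (Real.sqrt_nonneg _)
  have hc : ∀ j, c j ≤ 1 / 2 := by
    intro j
    have h2 : (2 : ℝ) ≤ Real.sqrt (4 + |(j : ℝ)|) := by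
      have : Real.sqrt 4 ≤ Real.sqrt (4 + |(j : ℝ)|) :=
        Real.sqrt_le_sqrt (by linarith [abs_nonneg ((j : ℝ))])
      have h4 : Real.sqrt 4 = 2 := by
        rw [show (4 : ℝ) = 2 ^ 2 by norm_num, Real.sqrt_sq (by norm_num)]
      linarith
    rw [hcdef]
    have hpos : (0 : ℝ) < Real.sqrt (4 + |(j : ℝ)|) := by linarith
    rw [inv_le_comm₀ (by linarith) (by norm_num)]
    linarith [hpos]
  have htwo : ((2 : ℝ≥0∞).toReal) = (2 : ℝ) := by simp
  -- the perturbation sequence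
  have husummable : Summable fun j : ℤ => ‖u j‖ ^ (2 : ℝ) :=
    htwo ▸ (lp.memℓp u).summable (by rw [htwo]; norm_num)
  have husummable' : Summable fun j : ℤ => ‖u (-j)‖ ^ (2 : ℝ) :=
    ((Equiv.neg ℤ).summable_iff (f := fun j : ℤ => ‖u j‖ ^ (2 : ℝ))).2 husummable
  have hwle : ∀ j : ℤ, ‖((c j : ℂ)) * u (-j)‖ ^ (2 : ℝ) ≤
      (1 / 4 : ℝ) * ‖u (-j)‖ ^ (2 : ℝ) := by
    intro j
    have h1 : ‖((c j : ℂ)) * u (-j)‖ = c j * ‖u (-j)‖ := by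
      rw [norm_mul, Complex.norm_real, Real.norm_of_nonneg (hc0 j)]
    rw [h1]
    rw [Real.rpow_two, Real.rpow_two, mul_pow]
    have h2 : c j ^ 2 ≤ 1 / 4 := by nlinarith [hc j, hc0 j]
    nlinarith [sq_nonneg (‖u (-j)‖), mul_le_mul_of_nonneg_right h2 (sq_nonneg ‖u (-j)‖)]
  have hwmem : Memℓp (fun j : ℤ => ((c j : ℂ)) * u (-j)) 2 := by
    apply memℓp_gen
    rw [htwo]
    exact Summable.of_nonneg_of_le (fun j => by positivity) hwle (husummable'.mul_left _)
  set v : lp (fun _ : ℤ => ℂ) 2 := ⟨fun j : ℤ => ((c j : ℂ)) * u (-j), hwmem⟩ with hvdef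
  have hvcoe : ∀ j, v j = ((c j : ℂ)) * u (-j) := fun j => rfl
  have hvnorm : ‖v‖ ≤ (1 / 2) * ‖x‖ := by
    apply lp.norm_le_of_tsum_le (by rw [htwo]; norm_num) (by positivity)
    rw [htwo]
    have hsum : ∑' j : ℤ, ‖v j‖ ^ (2 : ℝ) ≤ ∑' j : ℤ, (1 / 4 : ℝ) * ‖u (-j)‖ ^ (2 : ℝ) := by
      apply Summable.tsum_le_tsum hwle _ (husummable'.mul_left _)
      exact Summable.of_nonneg_of_le (fun j => by positivity) hwle (husummable'.mul_left _)
    have hre : ∑' j : ℤ, ‖u (-j)‖ ^ (2 : ℝ) = ∑' j : ℤ, ‖u j‖ ^ (2 : ℝ) :=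
      (Equiv.neg ℤ).tsum_eq (fun j : ℤ => ‖u j‖ ^ (2 : ℝ))
    have hnorm : ∑' j : ℤ, ‖u j‖ ^ (2 : ℝ) = ‖u‖ ^ (2 : ℝ) := by
      have h := lp.norm_rpow_eq_tsum (p := 2) (by rw [htwo]; norm_num) u
      rw [htwo] at h
      exact h.symm
    rw [tsum_mul_left, hre, hnorm, hunorm] at hsum
    calc ∑' j : ℤ, ‖v j‖ ^ (2 : ℝ) ≤ 1 / 4 * ‖x‖ ^ (2 : ℝ) := hsum
      _ = (1 / 2 * ‖x‖) ^ (2 : ℝ) := by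
          rw [Real.rpow_two, Real.rpow_two]; ring
  -- identify the frame coefficients
  have hkey : ∀ j : ℤ, ‖⟪x, f j⟫_ℂ‖ = ‖(u + v) j‖ := by
    intro j
    rw [norm_inner_symm, hf j]
    have h2 : ⟪e j + ((Real.sqrt (4 + |(j : ℝ)|))⁻¹ : ℂ) • e (-j), x⟫_ℂ
        = u j + (c j : ℂ) * u (-j) := by
      rw [inner_add_left, inner_smul_left, hu, hu]
      simp [hcdef, Complex.conj_ofReal, Complex.ofReal_inv]
    rw [h2, lp.coeFn_add, Pi.add_apply, hvcoe, hu]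
  -- summability and sum identification
  have h2pos : (0 : ℝ) < (2 : ℝ≥0∞).toReal := by rw [htwo]; norm_num
  have hsum2 : Summable fun j : ℤ => ‖(u + v) j‖ ^ (2 : ℝ) :=
    htwo ▸ (lp.memℓp (u + v)).summable h2pos
  have hfun : (fun j : ℤ => ‖⟪x, f j⟫_ℂ‖ ^ 2) = fun j : ℤ => ‖(u + v) j‖ ^ (2 : ℝ) := by
    funext j
    rw [hkey j, Real.rpow_two]
  have hsummable : Summable fun j : ℤ => ‖⟪x, f j⟫_ℂ‖ ^ 2 := by rw [hfun]; exact hsum2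
  have htsum : ∑' j : ℤ, ‖⟪x, f j⟫_ℂ‖ ^ 2 = ‖u + v‖ ^ 2 := by
    rw [hfun, ← htwo, ← lp.norm_rpow_eq_tsum h2pos (u + v), htwo, Real.rpow_two]
  -- norm bounds
  have hup : ‖u + v‖ ≤ ‖u‖ + ‖v‖ := norm_add_le u v
  refine ⟨hsummable, ?_, ?_⟩
  · rw [htsum]
    have h1 : (1 / 2 : ℝ) * ‖x‖ ≤ ‖u + v‖ := by
      have h3 : ‖u‖ ≤ ‖u + v‖ + ‖v‖ := by
        have h4 : u = (u + v) - v := by abel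
        calc ‖u‖ = ‖(u + v) - v‖ := by rw [← h4]
          _ ≤ ‖u + v‖ + ‖v‖ := norm_sub_le _ _
      rw [hunorm] at h3
      linarith [hvnorm]
    nlinarith [norm_nonneg x, lp.norm_nonneg' (u + v), h1]
  · rw [htsum]
    have h1 : ‖u + v‖ ≤ (3 / 2 : ℝ) * ‖x‖ := by
      rw [hunorm] at hup
      linarith [hvnorm]
    nlinarith [norm_nonneg x, lp.norm_nonneg' (u + v), h1]
end
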